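/- arXiv:2103.06163 — 2 statements merged into one kernel-verified Lean document; each statement's English description precedes it below -/
import Mathlib

section
/- Let p be an odd prime, k ≥ 1 and m ≥ 1 integers. The number of pairs (f, g) of monic polynomials in (ℤ/p^kℤ)[x] with deg f = m and deg g = 2 that are relatively prime (have no common monic factor of positive degree) is at least p^{(m+2)k}(1 − f_k(p)/p^{3k}), where f_k is a monic polynomial of degree 2k with coefficients of absolute value at most 2; consequently the proportion of relatively prime pairs tends to 1 as k → ∞. -/
open Polynomial Filter

/-- The number of pairs of relatively prime monic polynomials of degrees `m` and `2`
over `ℤ/p^kℤ`. -/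
noncomputable def coprimePairCount (p m k : ℕ) : ℕ :=
  Nat.card {fg : Polynomial (ZMod (p ^ k)) × Polynomial (ZMod (p ^ k)) //
    fg.1.Monic ∧ fg.1.natDegree = m ∧ fg.2.Monic ∧ fg.2.natDegree = 2 ∧
    ∀ h : Polynomial (ZMod (p ^ k)), h.Monic → 0 < h.natDegree → ¬(h ∣ fg.1 ∧ h ∣ fg.2)}

set_option linter.unusedSectionVars false


open Polynomial

section Aux

variable {R : Type*} [CommRing R] [Nontrivial R]

/-- Monic polynomials of degree `n` are equivalent to `degreeLT R n` via subtracting `X^n`. -/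
noncomputable def monicEquiv (n : ℕ) :
    {f : R[X] // f.Monic ∧ f.natDegree = n} ≃ Polynomial.degreeLT R n where
  toFun f := ⟨f.1 - X ^ n, by
    obtain ⟨f, hf, hd⟩ := f
    have hfd : f.degree = (n : ℕ) := by rw [degree_eq_natDegree hf.ne_zero, hd]
    rw [Polynomial.mem_degreeLT, ← hfd]
    exact degree_sub_lt (by rw [hfd, degree_X_pow]) hf.ne_zero
      (by rw [hf.leadingCoeff, (monic_X_pow n).leadingCoeff])⟩
  invFun q := ⟨X ^ n + q.1, monic_X_pow_add (Polynomial.mem_degreeLT.1 q.2),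
    natDegree_eq_of_degree_eq_some (by
      rw [degree_add_eq_left_of_degree_lt, degree_X_pow]
      rw [degree_X_pow]
      exact Polynomial.mem_degreeLT.1 q.2)⟩
  left_inv f := Subtype.ext (by ring)
  right_inv q := Subtype.ext (by ring)

lemma nat_card_monic [Fintype R] [DecidableEq R] (n : ℕ) :
    Nat.card {f : R[X] // f.Monic ∧ f.natDegree = n} = Fintype.card R ^ n := by
  rw [Nat.card_congr ((monicEquiv n).trans (Polynomial.degreeLTEquiv R n).toEquiv),
    Nat.card_eq_fintype_card]
  simp

lemma monic_ext_of_coeff {n : ℕ} {f g : R[X]} (hf : f.Monic) (hg : g.Monic)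
    (hfn : f.natDegree = n) (hgn : g.natDegree = n)
    (h : ∀ j, j < n → f.coeff j = g.coeff j) : f = g := by
  ext j
  rcases lt_trichotomy j n with hj | rfl | hj
  · exact h j hj
  · rw [← hfn, hf.coeff_natDegree, hfn, ← hgn, hg.coeff_natDegree]
  · rw [coeff_eq_zero_of_natDegree_lt (hfn ▸ hj), coeff_eq_zero_of_natDegree_lt (hgn ▸ hj)]

lemma monic_root_ext {n : ℕ} {a : R} {f g : R[X]} (hf : f.Monic) (hg : g.Monic)
    (hfn : f.natDegree = n) (hgn : g.natDegree = n)
    (hfa : f.eval a = 0) (hga : g.eval a = 0)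
    (h : ∀ j, 0 < j → j < n → f.coeff j = g.coeff j) : f = g := by
  have hco : ∀ j, 0 < j → f.coeff j = g.coeff j := by
    intro j hj
    rcases lt_trichotomy j n with h1 | rfl | h1
    · exact h j hj h1
    · rw [← hfn, hf.coeff_natDegree, hfn, ← hgn, hg.coeff_natDegree]
    · rw [coeff_eq_zero_of_natDegree_lt (hfn ▸ h1), coeff_eq_zero_of_natDegree_lt (hgn ▸ h1)]
  have hC : f - g = C ((f - g).coeff 0) := by
    ext j
    cases j with
    | zero => simp
    | succ j =>
      rw [coeff_C]
      simp [coeff_sub, hco (j + 1) (Nat.succ_pos j)]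
  have he : (f - g).eval a = 0 := by rw [eval_sub, hfa, hga, sub_zero]
  rw [hC, eval_C] at he
  have hz : f - g = 0 := by rw [hC, he, map_zero]
  exact sub_eq_zero.mp hz

end Aux

lemma count_bounds {R : Type*} [CommRing R] [Fintype R] [Nontrivial R] [DecidableEq R]
    {m : ℕ} (hm : 1 ≤ m) :
    Fintype.card R ^ (m + 2) ≤
      Nat.card {fg : R[X] × R[X] // fg.1.Monic ∧ fg.1.natDegree = m ∧ fg.2.Monic ∧
          fg.2.natDegree = 2 ∧
          ∀ h : R[X], h.Monic → 0 < h.natDegree → ¬(h ∣ fg.1 ∧ h ∣ fg.2)}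
        + Fintype.card R ^ (m + 1) + Fintype.card R ^ m ∧
    Nat.card {fg : R[X] × R[X] // fg.1.Monic ∧ fg.1.natDegree = m ∧ fg.2.Monic ∧
          fg.2.natDegree = 2 ∧
          ∀ h : R[X], h.Monic → 0 < h.natDegree → ¬(h ∣ fg.1 ∧ h ∣ fg.2)}
        ≤ Fintype.card R ^ (m + 2) := by
  classical
  set c := Fintype.card R with hc
  set Mpred : R[X] × R[X] → Prop := fun fg =>
    fg.1.Monic ∧ fg.1.natDegree = m ∧ fg.2.Monic ∧ fg.2.natDegree = 2 with hMpred
  set good : R[X] × R[X] → Prop := fun fg =>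
    ∀ h : R[X], h.Monic → 0 < h.natDegree → ¬(h ∣ fg.1 ∧ h ∣ fg.2) with hgood
  -- cardinality of monic polynomials
  haveI finMon : ∀ n : ℕ, Finite {f : R[X] // f.Monic ∧ f.natDegree = n} := fun n =>
    Finite.of_equiv _ ((monicEquiv n).trans (Polynomial.degreeLTEquiv R n).toEquiv).symm
  -- the big set of pairs
  have ePprod : {fg : R[X] × R[X] // Mpred fg} ≃
      {f : R[X] // f.Monic ∧ f.natDegree = m} × {f : R[X] // f.Monic ∧ f.natDegree = 2} :=
    { toFun := fun x => (⟨x.1.1, x.2.1, x.2.2.1⟩, ⟨x.1.2, x.2.2.2.1, x.2.2.2.2⟩)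
      invFun := fun y => ⟨(y.1.1, y.2.1), y.1.2.1, y.1.2.2, y.2.2.1, y.2.2.2⟩
      left_inv := fun x => rfl
      right_inv := fun y => rfl }
  haveI finP : Finite {fg : R[X] × R[X] // Mpred fg} := Finite.of_equiv _ ePprod.symm
  have cardP : Nat.card {fg : R[X] × R[X] // Mpred fg} = c ^ (m + 2) := by
    rw [Nat.card_congr ePprod, Nat.card_prod, nat_card_monic, nat_card_monic, ← pow_add]
  -- split into coprime and non-coprime pairs
  have split : Nat.card {fg : R[X] × R[X] // Mpred fg} =
      Nat.card {x : {fg : R[X] × R[X] // Mpred fg} // good x.1}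
        + Nat.card {x : {fg : R[X] × R[X] // Mpred fg} // ¬ good x.1} := by
    rw [Nat.card_congr (Equiv.sumCompl fun x : {fg : R[X] × R[X] // Mpred fg} => good x.1).symm,
      Nat.card_sum]
  -- the coprime count equals the stated subtype
  have eCount : {x : {fg : R[X] × R[X] // Mpred fg} // good x.1} ≃
      {fg : R[X] × R[X] // fg.1.Monic ∧ fg.1.natDegree = m ∧ fg.2.Monic ∧
          fg.2.natDegree = 2 ∧
          ∀ h : R[X], h.Monic → 0 < h.natDegree → ¬(h ∣ fg.1 ∧ h ∣ fg.2)} :=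
    (Equiv.subtypeSubtypeEquivSubtypeInter Mpred good).trans
      (Equiv.subtypeEquivRight (fun fg => by simp only [hMpred, hgood]; tauto))
  -- E1 : pairs with a common root
  have ι1inj : Function.Injective
      (fun x : {x : R × R[X] × R[X] // x.2.1.Monic ∧ x.2.1.natDegree = m ∧ x.2.1.eval x.1 = 0 ∧
          x.2.2.Monic ∧ x.2.2.natDegree = 2 ∧ x.2.2.eval x.1 = 0} =>
        ((x.1.1, fun i : Fin (m - 1) => x.1.2.1.coeff (i + 1),
          fun i : Fin 1 => x.1.2.2.coeff (i + 1)) : R × (Fin (m - 1) → R) × (Fin 1 → R))) := by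
    rintro ⟨⟨a, f, g⟩, hf1, hf2, hf3, hg1, hg2, hg3⟩ ⟨⟨a', f', g'⟩, hf1', hf2', hf3', hg1', hg2', hg3'⟩ h
    simp only [Prod.mk.injEq] at h
    obtain ⟨rfl, h2, h3⟩ := h
    have hfeq : f = f' := by
      refine monic_root_ext hf1 hf1' hf2 hf2' hf3 hf3' ?_
      intro j hj0 hjm
      have := congr_fun h2 ⟨j - 1, by omega⟩
      simpa [Nat.sub_add_cancel hj0] using this
    have hgeq : g = g' := by
      refine monic_root_ext hg1 hg1' hg2 hg2' hg3 hg3' ?_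
      intro j hj0 hj2
      have hj1 : j = 1 := by omega
      subst hj1
      have := congr_fun h3 ⟨0, by omega⟩
      simpa using this
    subst hfeq; subst hgeq; rfl
  haveI finE1 : Finite {x : R × R[X] × R[X] // x.2.1.Monic ∧ x.2.1.natDegree = m ∧
      x.2.1.eval x.1 = 0 ∧ x.2.2.Monic ∧ x.2.2.natDegree = 2 ∧ x.2.2.eval x.1 = 0} :=
    Finite.of_injective _ ι1inj
  have cardE1 : Nat.card {x : R × R[X] × R[X] // x.2.1.Monic ∧ x.2.1.natDegree = m ∧
      x.2.1.eval x.1 = 0 ∧ x.2.2.Monic ∧ x.2.2.natDegree = 2 ∧ x.2.2.eval x.1 = 0}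
      ≤ c ^ (m + 1) := by
    have h1 := Nat.card_le_card_of_injective _ ι1inj
    rw [Nat.card_eq_fintype_card (α := R × (Fin (m - 1) → R) × (Fin 1 → R))] at h1
    simp only [Fintype.card_prod, Fintype.card_fun, Fintype.card_fin, pow_one] at h1
    calc Nat.card _ ≤ c * (c ^ (m - 1) * c) := h1
      _ = c ^ (m + 1) := by
        rw [← pow_succ, ← pow_succ']
        congr 1
        omega
  -- E2 : pairs where g divides f
  have ι2inj : Function.Injective
      (fun x : {x : R[X] × R[X] // x.1.Monic ∧ x.1.natDegree = 2 ∧ x.2.Monic ∧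
          (x.1 * x.2).natDegree = m} =>
        ((fun i : Fin 2 => x.1.1.coeff i, fun i : Fin (m - 2) => x.1.2.coeff i) :
          (Fin 2 → R) × (Fin (m - 2) → R))) := by
    rintro ⟨⟨g, q⟩, hg1, hg2, hq1, hgq⟩ ⟨⟨g', q'⟩, hg1', hg2', hq1', hgq'⟩ h
    dsimp only at hg1 hg2 hq1 hgq hg1' hg2' hq1' hgq'
    simp only [Prod.mk.injEq] at h
    obtain ⟨h1, h2⟩ := h
    have hdq : q.natDegree = m - 2 := by
      have := hg1.natDegree_mul hq1
      omega
    have hdq' : q'.natDegree = m - 2 := by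
      have := hg1'.natDegree_mul hq1'
      omega
    have hgeq : g = g' := by
      refine monic_ext_of_coeff hg1 hg1' hg2 hg2' ?_
      intro j hj
      have := congr_fun h1 ⟨j, hj⟩
      simpa using this
    have hqeq : q = q' := by
      refine monic_ext_of_coeff hq1 hq1' hdq hdq' ?_
      intro j hj
      have := congr_fun h2 ⟨j, hj⟩
      simpa using this
    subst hgeq; subst hqeq; rfl
  haveI finE2 : Finite {x : R[X] × R[X] // x.1.Monic ∧ x.1.natDegree = 2 ∧ x.2.Monic ∧
      (x.1 * x.2).natDegree = m} := Finite.of_injective _ ι2inj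
  have cardE2 : Nat.card {x : R[X] × R[X] // x.1.Monic ∧ x.1.natDegree = 2 ∧ x.2.Monic ∧
      (x.1 * x.2).natDegree = m} ≤ c ^ m := by
    by_cases h2m : 2 ≤ m
    · have h1 := Nat.card_le_card_of_injective _ ι2inj
      rw [Nat.card_eq_fintype_card (α := (Fin 2 → R) × (Fin (m - 2) → R))] at h1
      simp only [Fintype.card_prod, Fintype.card_fun, Fintype.card_fin] at h1
      calc Nat.card _ ≤ c ^ 2 * c ^ (m - 2) := h1
        _ = c ^ m := by rw [← pow_add]; congr 1; omega
    · haveI : IsEmpty {x : R[X] × R[X] // x.1.Monic ∧ x.1.natDegree = 2 ∧ x.2.Monic ∧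
          (x.1 * x.2).natDegree = m} := by
        constructor
        rintro ⟨⟨g, q⟩, hg1, hg2, hq1, hgq⟩
        dsimp only at hg1 hg2 hq1 hgq
        have := hg1.natDegree_mul hq1
        omega
      simp [Nat.card_of_isEmpty]
  -- surjection onto noncoprime pairs
  set E1 := {x : R × R[X] × R[X] // x.2.1.Monic ∧ x.2.1.natDegree = m ∧ x.2.1.eval x.1 = 0 ∧
    x.2.2.Monic ∧ x.2.2.natDegree = 2 ∧ x.2.2.eval x.1 = 0} with hE1
  set E2 := {x : R[X] × R[X] // x.1.Monic ∧ x.1.natDegree = 2 ∧ x.2.Monic ∧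
    (x.1 * x.2).natDegree = m} with hE2
  have hφ : ∃ φ : E1 ⊕ E2 → {x : {fg : R[X] × R[X] // Mpred fg} // ¬ good x.1},
      Function.Surjective φ := by
    refine ⟨fun x => ?_, ?_⟩
    · rcases x with ⟨⟨a, f, g⟩, hf1, hf2, hf3, hg1, hg2, hg3⟩ | ⟨⟨g, q⟩, hg1, hg2, hq1, hgq⟩
      · refine ⟨⟨(f, g), hf1, hf2, hg1, hg2⟩, ?_⟩
        intro hgd
        exact hgd (X - C a) (monic_X_sub_C a) (by simp)
          ⟨dvd_iff_isRoot.mpr hf3, dvd_iff_isRoot.mpr hg3⟩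
      · dsimp only at hg1 hg2 hq1 hgq
        refine ⟨⟨(g * q, g), hg1.mul hq1, hgq, hg1, hg2⟩, ?_⟩
        intro hgd
        exact hgd g hg1 (by omega) ⟨⟨q, rfl⟩, dvd_refl g⟩
    · rintro ⟨⟨⟨f, g⟩, hf1, hfm, hg1, hg2⟩, hng⟩
      dsimp only at hf1 hfm hg1 hg2
      simp only [hgood, not_forall] at hng
      obtain ⟨h, hh1, hh2, hh3⟩ := hng
      rw [not_not] at hh3
      obtain ⟨hdf, hdg⟩ := hh3
      obtain ⟨t, ht⟩ := hdg
      have ht0 : t ≠ 0 := by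
        rintro rfl
        rw [mul_zero] at ht
        exact hg1.ne_zero ht
      have hdeg : h.natDegree + t.natDegree = 2 := by
        have := hh1.natDegree_mul' ht0
        rw [← ht, hg2] at this
        omega
      rcases (by omega : h.natDegree = 1 ∨ h.natDegree = 2) with hd1 | hd2
      · -- common root case
        have hX : h = X + C (h.coeff 0) := hh1.eq_X_add_C hd1
        have heval : h.eval (-h.coeff 0) = 0 := by
          rw [hX]; simp
        obtain ⟨s, hs⟩ := hdf
        have hfr : f.eval (-h.coeff 0) = 0 := by
          rw [hs, eval_mul, heval, zero_mul]
        have hgr : g.eval (-h.coeff 0) = 0 := by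
          rw [ht, eval_mul, heval, zero_mul]
        exact ⟨Sum.inl ⟨(-h.coeff 0, f, g), hf1, hfm, hfr, hg1, hg2, hgr⟩,
          Subtype.ext (Subtype.ext rfl)⟩
      · -- g divides f case
        have htd : t.natDegree = 0 := by omega
        have htm : t.Monic := by
          have := leadingCoeff_monic_mul hh1 (q := t)
          rw [← ht, hg1.leadingCoeff] at this
          exact this.symm
        have ht1 : t = 1 := htm.natDegree_eq_zero.mp htd
        rw [ht1, mul_one] at ht
        obtain ⟨s, hs⟩ := hdf
        rw [← ht] at hs
        have hsm : s.Monic := by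
          have := leadingCoeff_monic_mul hg1 (q := s)
          rw [← hs, hf1.leadingCoeff] at this
          exact this.symm
        refine ⟨Sum.inr ⟨(g, s), hg1, hg2, hsm, by dsimp only; rw [← hs]; exact hfm⟩, ?_⟩
        apply Subtype.ext
        apply Subtype.ext
        show (g * s, g) = (f, g)
        rw [hs]
  obtain ⟨φ, hφs⟩ := hφ
  have cardN : Nat.card {x : {fg : R[X] × R[X] // Mpred fg} // ¬ good x.1}
      ≤ c ^ (m + 1) + c ^ m := by
    refine (Nat.card_le_card_of_surjective φ hφs).trans ?_
    rw [Nat.card_sum]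
    exact add_le_add cardE1 cardE2
  have e1 : Nat.card {x : {fg : R[X] × R[X] // Mpred fg} // good x.1} =
      Nat.card {fg : R[X] × R[X] // fg.1.Monic ∧ fg.1.natDegree = m ∧ fg.2.Monic ∧
          fg.2.natDegree = 2 ∧
          ∀ h : R[X], h.Monic → 0 < h.natDegree → ¬(h ∣ fg.1 ∧ h ∣ fg.2)} :=
    Nat.card_congr eCount
  omega

section KeyBounds

theorem key_bounds (p : ℕ) [Fact p.Prime] (m : ℕ) (hm : 1 ≤ m) (k : ℕ) (hk : 1 ≤ k) :
    (p : ℕ) ^ ((m + 2) * k) ≤ coprimePairCount p m k + p ^ ((m + 1) * k) + p ^ (m * k) ∧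
    coprimePairCount p m k ≤ p ^ ((m + 2) * k) := by
  have hp2 : 2 ≤ p := (Fact.out : p.Prime).two_le
  haveI : NeZero (p ^ k) := ⟨pow_ne_zero k (by omega)⟩
  haveI : Fact (1 < p ^ k) := ⟨by
    calc 1 < 2 ^ 1 := by norm_num
    _ ≤ p ^ k := Nat.pow_le_pow_left hp2 1 |>.trans (Nat.pow_le_pow_right (by omega) hk)⟩
  have hcard : Fintype.card (ZMod (p ^ k)) = p ^ k := ZMod.card _
  obtain ⟨h1, h2⟩ := count_bounds (R := ZMod (p ^ k)) hm
  rw [hcard] at h1 h2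
  have hcc : coprimePairCount p m k = Nat.card
      {fg : Polynomial (ZMod (p ^ k)) × Polynomial (ZMod (p ^ k)) //
        fg.1.Monic ∧ fg.1.natDegree = m ∧ fg.2.Monic ∧ fg.2.natDegree = 2 ∧
        ∀ h : Polynomial (ZMod (p ^ k)), h.Monic → 0 < h.natDegree → ¬(h ∣ fg.1 ∧ h ∣ fg.2)} :=
    rfl
  rw [hcc]
  constructor
  · calc p ^ ((m + 2) * k) = (p ^ k) ^ (m + 2) := by rw [← pow_mul, Nat.mul_comm]
      _ ≤ _ + (p ^ k) ^ (m + 1) + (p ^ k) ^ m := h1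
      _ = _ + p ^ ((m + 1) * k) + p ^ (m * k) := by rw [← pow_mul, ← pow_mul, Nat.mul_comm k (m+1), Nat.mul_comm k m]
  · calc Nat.card _ ≤ (p ^ k) ^ (m + 2) := h2
      _ = p ^ ((m + 2) * k) := by rw [← pow_mul, Nat.mul_comm]

end KeyBounds

theorem hagedorn_hatley_count (p : ℕ) [Fact p.Prime] (hp : p ≠ 2) (m : ℕ) (hm : 1 ≤ m) :
    ∃ F : ℕ → Polynomial ℚ,
      (∀ k, 1 ≤ k → (F k).Monic ∧ (F k).natDegree = 2 * k ∧ ∀ i, |(F k).coeff i| ≤ 2) ∧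
      (∀ k, 1 ≤ k →
        (coprimePairCount p m k : ℝ) ≥
          (p : ℝ) ^ ((m + 2) * k) * (1 - (Rat.cast ((F k).eval (p : ℚ)) : ℝ) / (p : ℝ) ^ (3 * k))) ∧
      Tendsto (fun k => (coprimePairCount p m k : ℝ) / (p : ℝ) ^ ((m + 2) * k))
        atTop (nhds 1) := by
  have hp2 : 2 ≤ p := (Fact.out : p.Prime).two_le
  have hpR : (1 : ℝ) < p := by exact_mod_cast (by omega : 1 < p)
  have hp0 : (0 : ℝ) < p := by linarith
  have epow : ∀ a k : ℕ, (p : ℝ) ^ (a * k) = ((p : ℝ) ^ k) ^ a := fun a k => by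
    rw [mul_comm, pow_mul]
  have main_ineq : ∀ k, 1 ≤ k →
      ((p:ℝ)^k)^(m+2) - ((p:ℝ)^k)^(m+1) - ((p:ℝ)^k)^m ≤ (coprimePairCount p m k : ℝ) := by
    intro k hk
    have h1 := (key_bounds p m hm k hk).1
    have h1' := (Nat.cast_le (α := ℝ)).mpr h1
    push_cast at h1'
    rw [epow, epow, epow] at h1'
    linarith
  have upper : ∀ k, 1 ≤ k → (coprimePairCount p m k : ℝ) ≤ ((p:ℝ)^k)^(m+2) := by
    intro k hk
    have h2 := (key_bounds p m hm k hk).2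
    have h2' := (Nat.cast_le (α := ℝ)).mpr h2
    push_cast at h2'
    rwa [epow] at h2'
  refine ⟨fun k => X ^ (2 * k) + X ^ k, ?_, ?_, ?_⟩
  · intro k hk
    have hlt : ((X : Polynomial ℚ) ^ k).degree < ((2 * k : ℕ) : WithBot ℕ) := by
      rw [degree_X_pow]
      exact_mod_cast (by omega : k < 2 * k)
    refine ⟨monic_X_pow_add hlt, ?_, ?_⟩
    · exact natDegree_eq_of_degree_eq_some (by
        rw [degree_add_eq_left_of_degree_lt (by
          rw [degree_X_pow, degree_X_pow]
          exact_mod_cast (by omega : k < 2 * k)), degree_X_pow])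
    · intro i
      rw [coeff_add, coeff_X_pow, coeff_X_pow]
      split_ifs <;> norm_num
  · intro k hk
    simp only [eval_add, eval_pow, eval_X, Rat.cast_add, Rat.cast_pow, Rat.cast_natCast]
    set q : ℝ := (p : ℝ) ^ k with hqdef
    have hq0 : 0 < q := pow_pos hp0 k
    have hq' : q ≠ 0 := ne_of_gt hq0
    rw [ge_iff_le, epow (m + 2) k, epow 3 k, epow 2 k]
    have hrhs : q ^ (m+2) * (1 - (q^2 + q)/q^3) = q^(m+2) - q^(m+1) - q^m := by
      rw [pow_add q m 2, pow_add q m 1]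
      field_simp
      ring
    rw [hrhs]
    have := main_ineq k hk
    linarith
  · set r : ℝ := (p : ℝ)⁻¹ with hrdef
    have hr0 : 0 ≤ r := by positivity
    have hr1 : r < 1 := inv_lt_one_of_one_lt₀ hpR
    have t0 : Tendsto (fun k => r ^ k) atTop (nhds 0) :=
      tendsto_pow_atTop_nhds_zero_of_lt_one hr0 hr1
    have tlow : Tendsto (fun k => 1 - r ^ k - r ^ k * r ^ k) atTop (nhds 1) := by
      have hone : Tendsto (fun _ : ℕ => (1:ℝ)) atTop (nhds 1) := tendsto_const_nhds
      have h := (hone.sub t0).sub (t0.mul t0)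
      simpa using h
    refine tendsto_of_tendsto_of_tendsto_of_le_of_le' tlow tendsto_const_nhds ?_ ?_
    · filter_upwards [eventually_ge_atTop 1] with k hk
      set q : ℝ := (p : ℝ) ^ k with hqdef
      have hq0 : 0 < q := pow_pos hp0 k
      have hq1 : 0 < q ^ (m + 2) := pow_pos hq0 _
      have hrq : r ^ k = q⁻¹ := by rw [hrdef, inv_pow]
      rw [epow (m + 2) k, le_div_iff₀ hq1, hrq]
      have heq : (1 - q⁻¹ - q⁻¹ * q⁻¹) * q ^ (m + 2) = q^(m+2) - q^(m+1) - q^m := by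
        rw [pow_add q m 2, pow_add q m 1]
        field_simp
      rw [heq]
      exact main_ineq k hk
    · filter_upwards [eventually_ge_atTop 1] with k hk
      have hq1 : 0 < ((p:ℝ)^k) ^ (m + 2) := pow_pos (pow_pos hp0 k) _
      rw [epow (m + 2) k, div_le_one hq1]
      exact upper k hk
end

section
/- Let p be a prime and d ≥ 1 an integer. The set of squarefree monic polynomials of degree d in ℤ_p[x] has Haar measure 1 with respect to the product Haar probability measure on the coefficient space ℤ_p^d. -/
open Polynomial MeasureTheory

noncomputable section

instance padicMeasurableSpace (p : ℕ) [Fact p.Prime] : MeasurableSpace ℤ_[p] := borel _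

instance padicBorelSpace (p : ℕ) [Fact p.Prime] : BorelSpace ℤ_[p] := ⟨rfl⟩

/-- The Haar probability measure on `ℤ_[p]`, normalized so that `ℤ_[p]` has measure 1. -/
def padicHaar (p : ℕ) [Fact p.Prime] : Measure ℤ_[p] :=
  Measure.addHaarMeasure ⟨⟨Set.univ, isCompact_univ⟩, by simp⟩

/-- The monic polynomial of degree `d` with non-leading coefficients given by `a`. -/
def monicOf {R : Type*} [CommRing R] (d : ℕ) (a : Fin d → R) : R[X] :=
  X ^ d + ∑ i : Fin d, C (a i) * X ^ (i : ℕ)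

/-!
If a monic `f` is not squarefree, then `f` and `f'` have a common factor of positive degree,
so the resultant `Res(f, f')` vanishes. This resultant is a polynomial in the coefficients of `f`,
so it cuts out a closed set containing every non-squarefree `f`. Writing `f = t + q` with `t` the
constant term, `f' = q'` does not depend on `t`, and over an algebraic closure
`Res(t + q, q') = ± lc(q')ᵈ ∏_{q'(α) = 0} (t + q(α))`, which vanishes for only finitely many `t`.
Since Haar measure on `ℤ_[p]` has no atoms, Fubini shows that the closed set is null.
-/

open Filter Topology

namespace Polynomial

variable {R : Type*} [CommRing R]

theorem resultant_eq_zero_of_dvd_of_dvd [IsDomain R] {f g h : R[X]} {m n : ℕ}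
    (hh : 0 < h.natDegree) (hf : h ∣ f) (hg : h ∣ g) (hfm : f.natDegree ≤ m)
    (hgn : g.natDegree ≤ n) (hmn : m ≠ 0 ∨ n ≠ 0) : resultant f g m n = 0 := by
  obtain ⟨u, v, -, -, huv⟩ := exists_mul_add_mul_eq_C_resultant f g hfm hgn hmn
  have hdvd : h ∣ C (resultant f g m n) := huv ▸ dvd_add (hf.mul_right u) (hg.mul_right v)
  by_contra hres
  have := natDegree_le_of_dvd hdvd (C_ne_zero.mpr hres)
  rw [natDegree_C] at this
  omega

theorem Monic.resultant_derivative_eq_zero_of_not_squarefree [IsDomain R] {f : R[X]}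
    (hf : f.Monic) (hsq : ¬Squarefree f) :
    resultant f (derivative f) f.natDegree (f.natDegree - 1) = 0 := by
  obtain ⟨h, hsq, hunit⟩ : ∃ h, h * h ∣ f ∧ ¬IsUnit h := by
    simpa [Squarefree] using hsq
  have hdvd : h ∣ f := (dvd_mul_right h h).trans hsq
  have hpos : 0 < h.natDegree := natDegree_pos_of_not_isUnit_of_dvd_monic hf hunit hdvd
  obtain ⟨c, rfl⟩ := hsq
  refine resultant_eq_zero_of_dvd_of_dvd hpos hdvd
    ⟨derivative h * c + derivative h * c + h * derivative c, by simp only [derivative_mul]; ring⟩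
    le_rfl (natDegree_derivative_le _) (Or.inl ?_)
  exact (hpos.trans_le (natDegree_le_of_dvd hdvd hf.ne_zero)).ne'

theorem finite_setOf_resultant_C_add_eq_zero [IsDomain R] {q g : R[X]} {m : ℕ} (hg : g ≠ 0)
    (hq : q.natDegree ≤ m) : {t : R | resultant (C t + q) g m g.natDegree = 0}.Finite := by
  classical
  let K := AlgebraicClosure (FractionRing R)
  let φ : R →+* K := (algebraMap (FractionRing R) K).comp (algebraMap R (FractionRing R))
  have hφ : Function.Injective φ :=
    (algebraMap (FractionRing R) K).injective.comp (IsFractionRing.injective R (FractionRing R))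
  set G := g.map φ
  apply ((G.roots.map fun α => -(q.map φ).eval α).toFinset.finite_toSet.preimage hφ.injOn).subset
  intro t ht
  have hGdeg : G.natDegree = g.natDegree := natDegree_map_eq_of_injective hφ g
  have hFdeg : (C (φ t) + q.map φ).natDegree ≤ m :=
    (natDegree_add_le _ _).trans (max_le (by simp) ((natDegree_map_le).trans hq))
  have hlc : G.leadingCoeff ^ m ≠ 0 :=
    pow_ne_zero _ (leadingCoeff_ne_zero.mpr ((Polynomial.map_ne_zero_iff hφ).mpr hg))
  have hprod := resultant_eq_prod_eval G (C (φ t) + q.map φ) m hFdeg (IsAlgClosed.splits G)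
  rw [hGdeg, ← map_C, ← Polynomial.map_add, resultant_map_map, resultant_comm, ht, mul_zero,
    map_zero, eq_comm, mul_eq_zero, or_iff_right hlc, Multiset.prod_eq_zero_iff] at hprod
  obtain ⟨α, hα, hαt⟩ := Multiset.mem_map.mp hprod
  simp only [Set.mem_preimage, Finset.mem_coe, Multiset.mem_toFinset, Multiset.mem_map]
  refine ⟨α, hα, ?_⟩
  simp only [Polynomial.map_add, map_C, eval_add, eval_C] at hαt
  linear_combination -hαt

theorem continuous_resultant {X : Type*} [TopologicalSpace X] [TopologicalSpace R]
    [IsTopologicalRing R] {f g : X → R[X]} (hf : ∀ k, Continuous fun x => (f x).coeff k)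
    (hg : ∀ k, Continuous fun x => (g x).coeff k) (m n : ℕ) :
    Continuous fun x => resultant (f x) (g x) m n := by
  refine Continuous.matrix_det (continuous_matrix fun i j => ?_)
  induction j using Fin.addCases <;>
  · simp only [sylvester, Matrix.of_apply, Fin.addCases_left, Fin.addCases_right]
    split_ifs <;> first | exact hf _ | exact hg _ | exact continuous_const

theorem continuous_coeff_derivative {X : Type*} [TopologicalSpace X] [TopologicalSpace R]
    [IsTopologicalRing R] {f : X → R[X]} (hf : ∀ k, Continuous fun x => (f x).coeff k) (k : ℕ) :
    Continuous fun x => (derivative (f x)).coeff k := by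
  simp only [coeff_derivative]
  exact (hf _).mul continuous_const

end Polynomial

section monicOf

variable {R : Type*} [CommRing R]

theorem continuous_coeff_monicOf [TopologicalSpace R] [IsTopologicalRing R] (d k : ℕ) :
    Continuous fun a : Fin d → R => (monicOf d a).coeff k := by
  simp only [monicOf, coeff_add, finsetSum_coeff, coeff_C_mul]
  fun_prop

theorem monic_monicOf [Nontrivial R] (d : ℕ) (a : Fin d → R) : (monicOf d a).Monic :=
  monic_X_pow_add (degree_sum_fin_lt a)

theorem natDegree_monicOf [Nontrivial R] (d : ℕ) (a : Fin d → R) :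
    (monicOf d a).natDegree = d := by
  rw [monicOf, natDegree_add_eq_left_of_degree_lt, natDegree_X_pow]
  simpa using degree_sum_fin_lt a

theorem monicOf_cons (n : ℕ) (t : R) (y : Fin n → R) :
    monicOf (n + 1) (Fin.cons t y) = C t + monicOf (n + 1) (Fin.cons 0 y) := by
  simp only [monicOf, Fin.sum_univ_succ, Fin.cons_zero, Fin.cons_succ, map_zero,
    Fin.val_zero, pow_zero, mul_one]
  ring

theorem finite_setOf_resultant_monicOf_cons_eq_zero [IsDomain R] [CharZero R] {n : ℕ}
    (y : Fin n → R) :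
    {t : R | resultant (monicOf (n + 1) (Fin.cons t y))
      (derivative (monicOf (n + 1) (Fin.cons t y))) (n + 1) n = 0}.Finite := by
  set q := monicOf (n + 1) (Fin.cons 0 y)
  have hq : q.natDegree = n + 1 := natDegree_monicOf _ _
  have hq' : (derivative q).natDegree = n := by rw [natDegree_derivative, hq, Nat.add_sub_cancel]
  have hq'0 : derivative q ≠ 0 := by
    rw [Ne, derivative_eq_zero, hq]
    exact n.succ_ne_zero
  convert finite_setOf_resultant_C_add_eq_zero hq'0 hq.le using 3 with t
  rw [monicOf_cons, derivative_add, derivative_C, zero_add, hq']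

end monicOf

namespace MeasureTheory

theorem Measure.pi_eq_zero_of_forall_cons {n : ℕ} {α : Type*} [MeasurableSpace α]
    (μ : Fin (n + 1) → Measure α) [∀ i, SigmaFinite (μ i)] {s : Set (Fin (n + 1) → α)}
    (hs : MeasurableSet s) (h : ∀ y : Fin n → α, μ 0 {t | Fin.cons t y ∈ s} = 0) :
    Measure.pi μ s = 0 := by
  let e := MeasurableEquiv.piFinSuccAbove (fun _ : Fin (n + 1) => α) 0
  rw [← ((measurePreserving_piFinSuccAbove μ 0).symm e).measure_preimage hs.nullMeasurableSet,
    Measure.prod_apply_symm (e.symm.measurable hs)]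
  refine lintegral_eq_zero_of_ae_eq_zero (Eventually.of_forall fun y => ?_)
  simpa [e, Fin.insertNth_zero', Fin.consEquiv, Set.preimage] using h y

end MeasureTheory

section padicHaar

variable (p : ℕ) [Fact p.Prime]

instance : IsProbabilityMeasure (padicHaar p) :=
  ⟨Measure.addHaarMeasure_self⟩

instance : (padicHaar p).IsAddHaarMeasure :=
  Measure.isAddHaarMeasure_addHaarMeasure _

-- Makes `padicHaar p` atomless, through `IsAddHaarMeasure.nullSingletonClass`.
instance : (𝓝[≠] (0 : ℤ_[p])).NeBot := by
  have hp := (Fact.out : p.Prime)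
  refine mem_closure_iff_nhdsWithin_neBot.mp (mem_closure_of_tendsto
    (tendsto_pow_atTop_nhds_zero_of_norm_lt_one (x := (p : ℤ_[p])) ?_)
    (Eventually.of_forall fun n => pow_ne_zero n (Nat.cast_ne_zero.mpr hp.ne_zero)))
  rw [PadicInt.norm_p]
  exact inv_lt_one_of_one_lt₀ (mod_cast hp.one_lt)

end padicHaar

theorem measure_squarefree (p : ℕ) [Fact p.Prime] (d : ℕ) (hd : 1 ≤ d) :
    Measure.pi (fun _ : Fin d => padicHaar p)
      {a : Fin d → ℤ_[p] | Squarefree (monicOf d a)} = 1 := by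
  obtain ⟨n, rfl⟩ := Nat.exists_eq_add_of_le' hd
  set B := {a : Fin (n + 1) → ℤ_[p] |
    resultant (monicOf (n + 1) a) (derivative (monicOf (n + 1) a)) (n + 1) n = 0}
  have hB : IsClosed B := isClosed_eq (continuous_resultant (continuous_coeff_monicOf _)
    (continuous_coeff_derivative (continuous_coeff_monicOf _)) _ _) continuous_const
  have hB_null : Measure.pi (fun _ => padicHaar p) B = 0 :=
    Measure.pi_eq_zero_of_forall_cons _ hB.measurableSet fun y =>
      (finite_setOf_resultant_monicOf_cons_eq_zero y).measure_zero _
  have hsub : {a | Squarefree (monicOf (n + 1) a)}ᶜ ⊆ B := fun a ha => by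
    simpa [B, natDegree_monicOf] using
      (monic_monicOf _ a).resultant_derivative_eq_zero_of_not_squarefree ha
  rw [measure_congr (ae_eq_univ.mpr (measure_mono_null hsub hB_null)), measure_univ]
end
end
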